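/- Let w = ℓ₁ℓ₂⋯ℓₙ be the nonincreasing factorization of a nonempty finite word w into Lyndon words, i.e., each ℓᵢ is a Lyndon word and ℓ₁ ≥ ℓ₂ ≥ ⋯ ≥ ℓₙ lexicographically. Then ℓ₁ is the shortest nonempty prefix p of w such that p^ω ≥ w^ω: namely ℓ₁^ω ≥ w^ω, and every nonempty prefix p of w with |p| < |ℓ₁| satisfies p^ω < w^ω. -/

import Mathlib

set_option linter.unusedSectionVars false


variable {A : Type*} [LinearOrder A] [Inhabited A]

/-- The infinite periodic word `u^ω = uuu⋯`, as a function `ℕ → A`. -/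
def omegaPow (u : List A) : ℕ → A := fun n => u.getD (n % u.length) default

/-- Lexicographic order on infinite words: `s < t` iff at the first position where
they differ, `s` has the smaller letter. -/
def lexLt (s t : ℕ → A) : Prop := ∃ k, (∀ i < k, s i = t i) ∧ s k < t k

/-- Non-strict lexicographic order on infinite words. -/
def lexLe (s t : ℕ → A) : Prop := lexLt s t ∨ s = t

/-- A nonempty word `w` is a Lyndon word: `w` is lexicographically smaller than
each of its nonempty proper suffixes. -/
def IsLyndon (w : List A) : Prop :=
  w ≠ [] ∧ ∀ v, v <:+ w → v ≠ [] → v ≠ w → List.Lex (· < ·) w v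

lemma mod_add_eq' {P n i : ℕ} (h : n % P + i < P) : (n + i) % P = n % P + i := by
  conv_lhs => rw [← Nat.div_add_mod n P]
  rw [Nat.add_assoc, Nat.mul_add_mod, Nat.mod_eq_of_lt h]

lemma lex_pos {u v : List A} (h : List.Lex (· < ·) u v) :
    (∃ t, t < u.length ∧ t < v.length ∧ (∀ i < t, u.getD i default = v.getD i default) ∧
      u.getD t default < v.getD t default) ∨ (u <+: v ∧ u.length < v.length) := by
  induction h with
  | nil => right; exact ⟨List.nil_prefix, by simp⟩
  | rel hab =>
      left
      exact ⟨0, by simp, by simp, by intro i hi; exact absurd hi (Nat.not_lt_zero _),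
        by simpa using hab⟩
  | cons h ih =>
      rcases ih with ⟨t, h1, h2, h3, h4⟩ | ⟨h1, h2⟩
      · left
        refine ⟨t + 1, by simpa using h1, by simpa using h2, ?_, by simpa using h4⟩
        rintro (_ | i) hi
        · simp
        · simpa using h3 i (by omega)
      · right
        exact ⟨List.cons_prefix_cons.mpr ⟨rfl, h1⟩, by simpa using h2⟩

lemma lyndon_dom {l : List A} (hl : IsLyndon l) {φ : ℕ} (h0 : 0 < φ) (hφ : φ < l.length) :
    ∃ t, φ + t < l.length ∧ (∀ i < t, l.getD (φ + i) default = l.getD i default) ∧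
      l.getD t default < l.getD (φ + t) default := by
  have hlen : (l.drop φ).length = l.length - φ := List.length_drop
  have hne : l.drop φ ≠ [] := by
    intro h; rw [h] at hlen; simp at hlen; omega
  have hne' : l.drop φ ≠ l := by
    intro h; rw [h] at hlen; omega
  have hgd : ∀ i, φ + i < l.length → (l.drop φ).getD i default = l.getD (φ + i) default := by
    intro i hi
    rw [List.getD_eq_getElem _ _ (by omega), List.getD_eq_getElem _ _ hi]
    exact List.getElem_drop
  rcases lex_pos (hl.2 _ (List.drop_suffix φ l) hne hne') with ⟨t, h1, h2, h3, h4⟩ | ⟨h1, h2⟩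
  · refine ⟨t, by omega, ?_, ?_⟩
    · intro i hi
      rw [← hgd i (by omega)]
      exact (h3 i hi).symm
    · rw [← hgd t (by omega)]; exact h4
  · omega

def BlockLE (b l : List A) : Prop :=
  (∃ t, t < b.length ∧ t < l.length ∧ (∀ i < t, b.getD i default = l.getD i default) ∧
    b.getD t default < l.getD t default) ∨ b <+: l

lemma blockLE_of_lex_or_eq {b l : List A} (h : List.Lex (· < ·) b l ∨ b = l) : BlockLE b l := by
  rcases h with h | rfl
  · rcases lex_pos h with ⟨t, h1, h2, h3, h4⟩ | ⟨h1, _⟩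
    · exact Or.inl ⟨t, h1, h2, h3, h4⟩
    · exact Or.inr h1
  · exact Or.inr (List.prefix_refl _)

lemma prefix_getD {b l : List A} (h : b <+: l) {i : ℕ} (hi : i < b.length) :
    b.getD i default = l.getD i default := by
  obtain ⟨s, rfl⟩ := h
  exact (List.getD_append _ _ _ _ hi).symm

lemma main_le {l : List A} (hl : IsLyndon l) (x : ℕ → A) (C : ℕ → Prop) (hC0 : C 0)
    (hblk : ∀ n, C n → ∃ b : List A, b ≠ [] ∧ BlockLE b l ∧
      (∀ i < b.length, x (n + i) = b.getD i default) ∧ C (n + b.length)) :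
    ∀ k, (∀ i < k, x i = omegaPow l i) → x k ≤ omegaPow l k := by
  have hP : 0 < l.length := List.length_pos_iff.mpr hl.1
  have hω : ∀ n i, n % l.length + i < l.length →
      omegaPow l (n + i) = l.getD (n % l.length + i) default := by
    intro n i h
    show l.getD _ _ = _
    rw [mod_add_eq' h]
  have key : ∀ D k n, k - n < D → C n → n ≤ k → (∀ i < k, x i = omegaPow l i) →
      x k ≤ omegaPow l k := by
    intro D
    induction D with
    | zero => intro k n h; omega
    | succ D ih =>
      intro k n hD hC hnk hagr
      obtain ⟨b, hbne, hble, hbx, hC'⟩ := hblk n hC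
      have hbpos : 0 < b.length := List.length_pos_iff.mpr hbne
      have hφP : n % l.length < l.length := Nat.mod_lt _ hP
      by_cases hk : k < n + b.length
      · -- k lies inside the block b
        have hrb : k - n < b.length := by omega
        have hxk : x k = b.getD (k - n) default := by
          have h := hbx (k - n) hrb
          rwa [Nat.add_sub_cancel' hnk] at h
        by_cases hφ0 : n % l.length = 0
        · -- phase 0
          have hω0 : ∀ i, i < l.length → omegaPow l (n + i) = l.getD i default := by
            intro i hi
            have h := hω n i (by omega)
            rwa [hφ0, Nat.zero_add] at h
          have hωk : ∀ i, i < l.length → i = k - n → omegaPow l k = l.getD i default := by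
            intro i hi hik
            subst hik
            have h := hω0 _ hi
            rwa [Nat.add_sub_cancel' hnk] at h
          rcases hble with ⟨t', ht'b, ht'l, hbagr, hblt⟩ | hpre
          · rcases lt_trichotomy (k - n) t' with h | h | h
            · rw [hxk, hbagr _ h, hωk (k - n) (by omega) rfl]
            · rw [hxk, hωk (k - n) (by omega) rfl, h]
              exact le_of_lt hblt
            · exfalso
              have h3 := hagr (n + t') (by omega)
              rw [hbx t' ht'b, hω0 t' ht'l] at h3
              exact absurd h3 (ne_of_lt hblt)
          · have hbl : b.length ≤ l.length := hpre.length_le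
            rw [hxk, prefix_getD hpre hrb, hωk (k - n) (by omega) rfl]
        · -- phase φ ≠ 0
          obtain ⟨t, htP, htagr, htlt⟩ := lyndon_dom hl (Nat.pos_of_ne_zero hφ0) hφP
          have hbLt : ∀ i, i < b.length → n + i < k → i ≤ t →
              b.getD i default = l.getD (n % l.length + i) default := by
            intro i h1 h2 h3
            have h4 := hagr (n + i) h2
            rw [hbx i h1, hω n i (by omega)] at h4
            exact h4
          have hrt : k - n ≤ t := by
            by_contra hcon
            push_neg at hcon
            have hbt : b.getD t default = l.getD (n % l.length + t) default :=
              hbLt t (by omega) (by omega) le_rfl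
            rcases hble with ⟨t', ht'b, ht'l, hbagr, hblt⟩ | hpre
            · rcases lt_trichotomy t' t with h | h | h
              · have h5 := hbLt t' ht'b (by omega) (le_of_lt h)
                rw [htagr t' h] at h5
                exact absurd h5 (ne_of_lt hblt)
              · subst h
                have : b.getD t' default < l.getD (n % l.length + t') default :=
                  lt_trans hblt htlt
                exact absurd hbt (ne_of_lt this)
              · have h5 := hbagr t h
                rw [hbt] at h5
                exact absurd h5.symm (ne_of_lt htlt)
            · have h5 := prefix_getD hpre (show t < b.length by omega)
              rw [hbt] at h5
              exact absurd h5.symm (ne_of_lt htlt)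
          have hωk : omegaPow l k = l.getD (n % l.length + (k - n)) default := by
            have h := hω n (k - n) (by omega)
            rwa [Nat.add_sub_cancel' hnk] at h
          have hle : l.getD (k - n) default ≤ l.getD (n % l.length + (k - n)) default := by
            rcases eq_or_lt_of_le hrt with h | h
            · rw [h]; exact le_of_lt htlt
            · rw [htagr _ h]
          rcases hble with ⟨t', ht'b, ht'l, hbagr, hblt⟩ | hpre
          · rcases lt_trichotomy (k - n) t' with h | h | h
            · rw [hxk, hbagr _ h, hωk]; exact hle
            · rw [hxk, hωk]
              exact le_of_lt (lt_of_lt_of_le (h ▸ hblt) (h ▸ hle))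
            · exfalso
              have h5 := hbLt t' ht'b (by omega) (by omega)
              rw [htagr t' (by omega)] at h5
              exact absurd h5 (ne_of_lt hblt)
          · rw [hxk, prefix_getD hpre hrb, hωk]; exact hle
      · -- k lies beyond the block: strict case is absurd, prefix case recurses
        rcases hble with ⟨t', ht'b, ht'l, hbagr, hblt⟩ | hpre
        · exfalso
          have hagr' := hagr (n + t') (by omega)
          rw [hbx t' ht'b] at hagr'
          by_cases hφ0 : n % l.length = 0
          · rw [hω n t' (by omega)] at hagr'
            rw [hφ0, Nat.zero_add] at hagr'
            exact absurd hagr' (ne_of_lt hblt)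
          · obtain ⟨t, htP, htagr, htlt⟩ := lyndon_dom hl (Nat.pos_of_ne_zero hφ0) hφP
            rcases lt_trichotomy t' t with h | h | h
            · rw [hω n t' (by omega), htagr t' h] at hagr'
              exact absurd hagr' (ne_of_lt hblt)
            · subst h
              rw [hω n t' (by omega)] at hagr'
              exact absurd hagr' (ne_of_lt (lt_trans hblt htlt))
            · have hagr2 := hagr (n + t) (by omega)
              rw [hbx t (by omega), hω n t (by omega), hbagr t h] at hagr2
              exact absurd hagr2 (ne_of_lt htlt)
        · exact ih k (n + b.length) (by omega) hC' (by omega) hagr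
  intro k hagr
  exact key (k + 1) k 0 (by omega) hC0 (Nat.zero_le _) hagr

lemma chain_head (L : List (List A))
    (hchain : ∀ i : ℕ, (h : i + 1 < L.length) →
      List.Lex (· < ·) (L[i + 1]'h) (L[i]'(Nat.lt_of_succ_lt h)) ∨ (L[i + 1]'h) = (L[i]'(Nat.lt_of_succ_lt h))) :
    ∀ j (hj : j < L.length),
      List.Lex (· < ·) (L[j]'hj) (L[0]'(by omega)) ∨ (L[j]'hj) = (L[0]'(by omega)) := by
  intro j
  induction j with
  | zero => intro hj; right; rfl
  | succ j ih =>
      intro hj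
      have h1 := hchain j hj
      have h2 := ih (by omega)
      rcases h1 with h1 | h1 <;> rcases h2 with h2 | h2
      · exact Or.inl (List.lt_trans (α := A) h1 h2)
      · exact Or.inl (h2 ▸ h1)
      · exact Or.inl (h1 ▸ h2)
      · exact Or.inr (h1.trans h2)

lemma flatten_split (L : List (List A)) (j : ℕ) (hj : j < L.length) :
    L.flatten = (L.take j).flatten ++ ((L[j]'hj) ++ (L.drop (j+1)).flatten) := by
  conv_lhs => rw [← List.take_append_drop j L]
  rw [List.flatten_append]
  congr 1
  rw [List.drop_eq_getElem_cons hj, List.flatten_cons]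

lemma flatten_cut (L : List (List A)) (j : ℕ) (hj : j < L.length) (q : ℕ) :
    ∀ i < (L[j]'hj).length,
      omegaPow L.flatten (q * L.flatten.length + (L.take j).flatten.length + i)
        = (L[j]'hj).getD i default := by
  intro i hi
  have hsplit := flatten_split L j hj
  have hlen : (L.take j).flatten.length + i < L.flatten.length := by
    rw [hsplit]; simp; omega
  show L.flatten.getD _ default = _
  have hmod : (q * L.flatten.length + (L.take j).flatten.length + i) % L.flatten.length
      = (L.take j).flatten.length + i := by
    rw [Nat.add_assoc, Nat.mul_comm, Nat.mul_add_mod, Nat.mod_eq_of_lt hlen]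
  rw [hmod]
  conv_lhs => rw [hsplit]
  rw [List.getD_append_right _ _ _ _ (by omega), Nat.add_sub_cancel_left,
    List.getD_append _ _ _ _ hi]

lemma cut_step (L : List (List A)) (j : ℕ) (hj : j < L.length) (q : ℕ) :
    ∃ q' j', ∃ _ : j' < L.length,
      q * L.flatten.length + (L.take j).flatten.length + (L[j]'hj).length
        = q' * L.flatten.length + (L.take j').flatten.length := by
  have htake : (L.take (j+1)).flatten.length
      = (L.take j).flatten.length + (L[j]'hj).length := by
    rw [List.take_succ, List.flatten_append, List.length_append,
      List.getElem?_eq_getElem hj]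
    simp
  by_cases h : j + 1 < L.length
  · exact ⟨q, j + 1, h, by omega⟩
  · have hj1 : j + 1 = L.length := by omega
    have hfull : L.take (j + 1) = L := by rw [hj1]; exact List.take_length
    rw [hfull] at htake
    refine ⟨q + 1, 0, by omega, ?_⟩
    rw [Nat.succ_mul]
    simp only [List.take_zero, List.flatten_nil, List.length_nil]
    omega


/-- If `w = ℓ₁ℓ₂⋯ℓₙ` is the nonincreasing factorization of `w` into Lyndon words,
then `ℓ₁` is the shortest nonempty prefix `p` of `w` such that `p^ω ≥ w^ω`. -/
theorem first_lyndon_factor_shortest_prefix_ge_word (L : List (List A)) (hL : L ≠ [])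
    (hLyn : ∀ l ∈ L, IsLyndon l)
    (hchain : ∀ i : ℕ, (h : i + 1 < L.length) →
      List.Lex (· < ·) (L[i + 1]'h) (L[i]'(by omega)) ∨ (L[i + 1]'h) = (L[i]'(by omega))) :
    lexLe (omegaPow L.flatten) (omegaPow L.headI) ∧
    (∀ p : List A, p <+: L.flatten → p ≠ [] → p.length < L.headI.length →
      lexLt (omegaPow p) (omegaPow L.flatten)) := by
  classical
  have hLpos : 0 < L.length := List.length_pos_iff.mpr hL
  have hhead : L.headI = L[0]'hLpos := by
    cases L with
    | nil => exact absurd rfl hL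
    | cons a t => rfl
  rw [hhead]
  have hl : IsLyndon (L[0]'hLpos) := hLyn _ (List.getElem_mem hLpos)
  have hPl : 0 < (L[0]'hLpos).length := List.length_pos_iff.mpr hl.1
  have hlw : (L[0]'hLpos) <+: L.flatten := by
    refine ⟨(L.drop 1).flatten, ?_⟩
    have h := flatten_split L 0 hLpos
    simpa using h.symm
  have hW : (L[0]'hLpos).length ≤ L.flatten.length := hlw.length_le
  have hWpos : 0 < L.flatten.length := by omega
  have hlwD : ∀ i < (L[0]'hLpos).length,
      (L[0]'hLpos).getD i default = L.flatten.getD i default :=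
    fun i hi => prefix_getD hlw hi
  constructor
  · -- part 1
    have hpt := main_le hl (omegaPow L.flatten)
      (fun n => ∃ q j, ∃ hj : j < L.length,
        n = q * L.flatten.length + (L.take j).flatten.length)
      ⟨0, 0, hLpos, by simp⟩
      (by
        rintro n ⟨q, j, hj, rfl⟩
        refine ⟨L[j]'hj, (hLyn _ (List.getElem_mem hj)).1,
          blockLE_of_lex_or_eq (chain_head L hchain j hj), ?_, ?_⟩
        · intro i hi
          exact flatten_cut L j hj q i hi
        · obtain ⟨q', j', hj', heq⟩ := cut_step L j hj q
          exact ⟨q', j', hj', heq⟩)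
    by_cases h : omegaPow L.flatten = omegaPow (L[0]'hLpos)
    · exact Or.inr h
    · left
      have hne : ∃ n, omegaPow L.flatten n ≠ omegaPow (L[0]'hLpos) n := by
        by_contra h'
        push_neg at h'
        exact h (funext h')
      refine ⟨Nat.find hne, fun i hi => not_not.mp (Nat.find_min hne hi), ?_⟩
      exact lt_of_le_of_ne
        (hpt _ (fun i hi => not_not.mp (Nat.find_min hne hi)))
        (Nat.find_spec hne)
  · -- part 2
    intro p hpw hpne hplen
    have hpl : p <+: (L[0]'hLpos) := List.prefix_of_prefix_length_le hpw hlw (by omega)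
    have hm : 0 < p.length := List.length_pos_iff.mpr hpne
    have hplD : ∀ i < p.length, p.getD i default = (L[0]'hLpos).getD i default :=
      fun i hi => prefix_getD hpl hi
    have hop : ∀ i, omegaPow p i = p.getD (i % p.length) default := fun _ => rfl
    have hdiff : ∃ k, k < (L[0]'hLpos).length ∧
        omegaPow p k ≠ (L[0]'hLpos).getD k default := by
      by_contra hcon
      push_neg at hcon
      obtain ⟨t, htP, htagr, htlt⟩ := lyndon_dom hl hm hplen
      have h1 : (L[0]'hLpos).getD (p.length + t) default = p.getD (t % p.length) default := by
        rw [← hcon (p.length + t) htP]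
        show p.getD _ _ = _
        congr 1
        rw [Nat.add_comm]
        exact Nat.add_mod_right t p.length |>.symm ▸ rfl
      have h2 : (L[0]'hLpos).getD t default = p.getD (t % p.length) default := by
        rw [← hcon t (by omega)]
        rfl
      rw [h1, ← h2] at htlt
      exact lt_irrefl _ htlt
    obtain ⟨kw, hkw, hkwne⟩ := hdiff
    have hex : ∃ k, omegaPow p k ≠ (L[0]'hLpos).getD k default := ⟨kw, hkwne⟩
    have hk0lt : Nat.find hex < (L[0]'hLpos).length :=
      lt_of_le_of_lt (Nat.find_min' hex hkwne) hkw
    have hmin : ∀ i < Nat.find hex, omegaPow p i = (L[0]'hLpos).getD i default :=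
      fun i hi => not_not.mp (Nat.find_min hex hi)
    have hspec : omegaPow p (Nat.find hex) ≠ (L[0]'hLpos).getD (Nat.find hex) default :=
      Nat.find_spec hex
    set k0 := Nat.find hex with hk0def
    have hk0m : p.length ≤ k0 := by
      by_contra hcon
      push_neg at hcon
      apply hspec
      rw [hop, Nat.mod_eq_of_lt hcon]
      exact hplD k0 hcon
    have ha : 0 < k0 / p.length := (Nat.one_le_div_iff hm).mpr hk0m
    have hk0eq : (k0 / p.length) * p.length + k0 % p.length = k0 := by
      rw [Nat.mul_comm]
      exact Nat.div_add_mod k0 p.length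
    have hρm : k0 % p.length < p.length := Nat.mod_lt _ hm
    have hρk : k0 % p.length < k0 := by omega
    have hamlt : (k0 / p.length) * p.length < (L[0]'hLpos).length := by omega
    obtain ⟨t, htP, htagr, htlt⟩ := lyndon_dom hl (by positivity) hamlt
    have hF : ∀ i, i < k0 → (L[0]'hLpos).getD i default = p.getD (i % p.length) default := by
      intro i hi
      rw [← hmin i hi]
      rfl
    rcases lt_trichotomy ((k0 / p.length) * p.length + t) k0 with hc | hc | hc
    · exfalso
      have h1 : (L[0]'hLpos).getD ((k0 / p.length) * p.length + t) default
          = p.getD (t % p.length) default := by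
        rw [hF _ hc]
        congr 1
        rw [Nat.add_comm, Nat.add_mul_mod_self_right]
      have h2 : (L[0]'hLpos).getD t default = p.getD (t % p.length) default :=
        hF t (by omega)
      rw [h1, ← h2] at htlt
      exact lt_irrefl _ htlt
    · have ht' : t = k0 % p.length := by omega
      refine ⟨k0, ?_, ?_⟩
      · intro i hi
        have h1 := hmin i hi
        have h2 : (L[0]'hLpos).getD i default = L.flatten.getD i default :=
          hlwD i (by omega)
        show omegaPow p i = L.flatten.getD (i % L.flatten.length) default
        rw [Nat.mod_eq_of_lt (by omega : i < L.flatten.length), h1, h2]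
      · have hxx : omegaPow p k0 = (L[0]'hLpos).getD (k0 % p.length) default := by
          have h3 := hF (k0 % p.length) hρk
          rw [Nat.mod_eq_of_lt hρm] at h3
          rw [hop, h3]
        have hw1 : omegaPow L.flatten k0 = (L[0]'hLpos).getD k0 default := by
          show L.flatten.getD (k0 % L.flatten.length) default = _
          rw [Nat.mod_eq_of_lt (by omega), ← hlwD k0 hk0lt]
        rw [hxx, hw1, ← ht', ← hc]
        exact htlt
    · exfalso
      have hρt : k0 % p.length < t := by omega
      have h1 := htagr (k0 % p.length) hρt
      have h2 : (k0 / p.length) * p.length + k0 % p.length = k0 := hk0eq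
      rw [h2] at h1
      apply hspec
      rw [hop, h1]
      have h3 := hF (k0 % p.length) hρk
      rw [Nat.mod_eq_of_lt hρm] at h3
      exact h3.symm
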